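/- arXiv:1905.05013 — 2 statements merged into one kernel-verified Lean document; each statement's English description precedes it below -/
import Mathlib

section
/- There is no infinite sequence of configurations c₀ = {s₀}, c₁, c₂, … with Step cᵢ cᵢ₊₁ for all i; moreover, every finite Step-chain starting at the initial configuration {s₀} has length at most Fintype.card S. (Every play of the constructed Ludii token game is finite, as required for it to model a finite game.) -/
/-!
Every move replaces the configuration `{t}` by `{w}` for a child `w` of `t`, so a play from
`{s₀}` consists of single tokens, the `i`-th of which lies at depth exactly `i` (depth being the
number of parent steps back to the root). Distinct depths force distinct states, so the tokens
of a play are pairwise distinct and there are at most `Fintype.card S` of them.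
-/

/-- The child relation of the game tree: `a` is the parent of `b`, i.e. `f b = a`. -/
def Child {S : Type*} (s₀ : S) (f : ∀ s : S, s ≠ s₀ → S) (a b : S) : Prop :=
  ∃ h : b ≠ s₀, f b h = a

/-- Total version of the parent function (sending the root to itself). -/
def parentMap {S : Type*} [DecidableEq S] (s₀ : S) (f : ∀ s : S, s ≠ s₀ → S) (s : S) : S :=
  if h : s = s₀ then s₀ else f s h

/-- One step of the constructed Ludii token game: the token is removed from a
non-terminal vertex `v` of the configuration and placed on a child `w` of `v`. -/
def Step {S : Type*} [DecidableEq S] (s₀ : S) (Ster : Set S) (f : ∀ s : S, s ≠ s₀ → S)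
    (c c' : Finset S) : Prop :=
  ∃ v ∈ c, v ∉ Ster ∧ ∃ w, ∃ h : w ≠ s₀, f w h = v ∧ c' = insert w (c.erase v)

section HitTime

variable {α : Type*} [DecidableEq α] (g : α → α) (a : α) (hg : ∀ x, ∃ n, g^[n] x = a)

def hitTime (x : α) : ℕ :=
  Nat.find (hg x)

theorem hitTime_self : hitTime g a hg a = 0 :=
  Nat.find_eq_zero _ |>.2 rfl

theorem hitTime_of_ne {x : α} (hx : x ≠ a) : hitTime g a hg x = hitTime g a hg (g x) + 1 :=
  Nat.find_comp_succ (hg x) (hg (g x)) hx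

end HitTime

section TokenGame

variable {S : Type*} [DecidableEq S] {s₀ : S} {Ster : Set S} {f : ∀ s : S, s ≠ s₀ → S}

theorem parentMap_of_ne {w : S} (hw : w ≠ s₀) : parentMap s₀ f w = f w hw :=
  dif_neg hw

theorem Step.exists_child_of_singleton {t : S} {c' : Finset S} (hs : Step s₀ Ster f {t} c') :
    ∃ w, ∃ hw : w ≠ s₀, f w hw = t ∧ c' = {w} := by
  obtain ⟨v, hv, -, w, hw, hfw, rfl⟩ := hs
  obtain rfl := Finset.mem_singleton.1 hv
  exact ⟨w, hw, hfw, by simp⟩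

theorem Step.exists_singleton_hitTime_succ (hf : ∀ s, ∃ n, (parentMap s₀ f)^[n] s = s₀)
    {c c' : Finset S} {k : ℕ} (hs : Step s₀ Ster f c c')
    (hc : ∃ t, c = {t} ∧ hitTime (parentMap s₀ f) s₀ hf t = k) :
    ∃ t', c' = {t'} ∧ hitTime (parentMap s₀ f) s₀ hf t' = k + 1 := by
  obtain ⟨t, rfl, rfl⟩ := hc
  obtain ⟨w, hw, rfl, rfl⟩ := hs.exists_child_of_singleton
  exact ⟨w, rfl, by rw [hitTime_of_ne _ _ _ hw, parentMap_of_ne hw]⟩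

end TokenGame

theorem no_infinite_play_general {S : Type*} [Fintype S] [DecidableEq S]
    (s₀ : S) (Ster : Set S) (f : ∀ s : S, s ≠ s₀ → S)
    (hterm : ∀ s : S, ∃ n : ℕ, (parentMap s₀ f)^[n] s = s₀) :
    (¬ ∃ cs : ℕ → Finset S,
        cs 0 = {s₀} ∧ ∀ i : ℕ, Step s₀ Ster f (cs i) (cs (i + 1))) ∧
    (∀ (n : ℕ) (cs : Fin (n + 1) → Finset S),
        cs 0 = {s₀} →
        (∀ i : Fin n, Step s₀ Ster f (cs i.castSucc) (cs i.succ)) →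
        n ≤ Fintype.card S) := by
  set depth := hitTime (parentMap s₀ f) s₀ hterm
  have hstart : ∃ t, ({s₀} : Finset S) = {t} ∧ depth t = 0 := ⟨s₀, rfl, hitTime_self _ _ _⟩
  constructor
  · rintro ⟨cs, h0, hs⟩
    have hplay : ∀ i, ∃ t, cs i = {t} ∧ depth t = i := fun i => by
      induction i with
      | zero => exact h0 ▸ hstart
      | succ i ih => exact (hs i).exists_singleton_hitTime_succ hterm ih
    choose t ht using hplay
    exact not_injective_infinite_finite t (Function.LeftInverse.injective fun i => (ht i).2)
  · intro n cs h0 hs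
    have hplay : ∀ i, ∃ t, cs i = {t} ∧ depth t = i :=
      Fin.induction (h0 ▸ hstart) fun i ih => (hs i).exists_singleton_hitTime_succ hterm ih
    choose t ht using hplay
    have hcard := Fintype.card_le_of_injective t fun i j hij =>
      Fin.ext (by rw [← (ht i).2, hij, (ht j).2])
    rw [Fintype.card_fin] at hcard
    omega

/-- Every play of the constructed token game is finite: there is no infinite
`Step`-sequence starting at `{s₀}`, and every finite `Step`-chain starting at
`{s₀}` has length at most `Fintype.card S`. -/
theorem no_infinite_play {S : Type*} [Fintype S] [DecidableEq S]
    (s₀ : S) (Ster : Set S) (f : ∀ s : S, s ≠ s₀ → S)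
    (hroot : ∀ s : S, Relation.ReflTransGen (Child s₀ f) s₀ s)
    (hterm : ∀ s : S, ∃ n : ℕ, (parentMap s₀ f)^[n] s = s₀) :
    (¬ ∃ cs : ℕ → Finset S,
        cs 0 = {s₀} ∧ ∀ i : ℕ, Step s₀ Ster f (cs i) (cs (i + 1))) ∧
    (∀ (n : ℕ) (cs : Fin (n + 1) → Finset S),
        cs 0 = {s₀} →
        (∀ i : Fin n, Step s₀ Ster f (cs i.castSucc) (cs i.succ)) →
        n ≤ Fintype.card S) :=
  no_infinite_play_general s₀ Ster f hterm
end

section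
/- A singleton configuration {v} has no Step-successor if and only if v ∈ Ster or v has no children (no state w ≠ s₀ with f w = v). In particular, if Ster is exactly the set of leaves of the tree (states with no children), then a configuration reachable from {s₀} has no Step-successor if and only if its unique token vertex is a terminal state. (Terminal positions of the constructed Ludii token game correspond exactly to terminal states of the original game.) -/
section Singleton

variable {S : Type*} [DecidableEq S] {s₀ : S} {Ster : Set S} {f : ∀ s : S, s ≠ s₀ → S}
  {v : S}

theorem step_singleton_iff {c' : Finset S} :
    Step s₀ Ster f {v} c' ↔ v ∉ Ster ∧ ∃ w, Child s₀ f v w ∧ c' = {w} := by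
  simp only [Step, Child, Finset.mem_singleton, exists_eq_left, Finset.erase_singleton,
    insert_empty_eq, exists_and_right]

theorem exists_step_singleton_iff :
    (∃ c', Step s₀ Ster f {v} c') ↔ v ∉ Ster ∧ ∃ w, Child s₀ f v w := by
  simp only [step_singleton_iff]
  constructor
  · rintro ⟨_, hv, w, hw, _⟩
    exact ⟨hv, w, hw⟩
  · rintro ⟨hv, w, hw⟩
    exact ⟨{w}, hv, w, hw, rfl⟩

theorem not_exists_step_singleton_iff :
    (¬ ∃ c', Step s₀ Ster f {v} c') ↔ v ∈ Ster ∨ ∀ w, ¬ Child s₀ f v w := by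
  rw [exists_step_singleton_iff, not_and_or, not_not, not_exists]

end Singleton

theorem no_successor_iff_terminal_general {S : Type*} [DecidableEq S]
    (s₀ : S) (Ster : Set S) (f : ∀ s : S, s ≠ s₀ → S) :
    (∀ v : S,
      (¬ ∃ c' : Finset S, Step s₀ Ster f {v} c') ↔
        (v ∈ Ster ∨ ¬ ∃ w : S, ∃ h : w ≠ s₀, f w h = v)) ∧
    (Ster = {s : S | ∀ w : S, ¬ Child s₀ f s w} →
      ∀ c : Finset S, Relation.ReflTransGen (Step s₀ Ster f) {s₀} c →
        ∀ v : S, c = {v} →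
          ((¬ ∃ c' : Finset S, Step s₀ Ster f c c') ↔ v ∈ Ster)) := by
  refine ⟨fun v => ?_, ?_⟩
  · rw [not_exists_step_singleton_iff, ← not_exists]
    rfl
  · rintro rfl c - v rfl
    rw [not_exists_step_singleton_iff]
    exact or_self_iff

/-- A singleton configuration `{v}` has no `Step`-successor iff `v ∈ Ster` or `v`
has no children. In particular, if `Ster` is exactly the set of leaves, then a
configuration reachable from `{s₀}` has no `Step`-successor iff its unique token
vertex is terminal. -/
theorem no_successor_iff_terminal {S : Type*} [Fintype S] [DecidableEq S]
    (s₀ : S) (Ster : Set S) (f : ∀ s : S, s ≠ s₀ → S)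
    (hroot : ∀ s : S, Relation.ReflTransGen (Child s₀ f) s₀ s)
    (hterm : ∀ s : S, ∃ n : ℕ, (parentMap s₀ f)^[n] s = s₀) :
    (∀ v : S,
      (¬ ∃ c' : Finset S, Step s₀ Ster f {v} c') ↔
        (v ∈ Ster ∨ ¬ ∃ w : S, ∃ h : w ≠ s₀, f w h = v)) ∧
    (Ster = {s : S | ∀ w : S, ¬ Child s₀ f s w} →
      ∀ c : Finset S, Relation.ReflTransGen (Step s₀ Ster f) {s₀} c →
        ∀ v : S, c = {v} →
          ((¬ ∃ c' : Finset S, Step s₀ Ster f c c') ↔ v ∈ Ster)) :=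
  no_successor_iff_terminal_general s₀ Ster f
end
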